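/- Let (p_j)_{j≥1} be a nonnegative summable sequence of reals with Σ_{j≥1} p_j = 1, and let d ≥ 1 be an integer. Define the truncated sequence (p̄_j)_{j≥1} by p̄_j = p_j for 1 ≤ j ≤ d−1, p̄_d = Σ_{j≥d} p_j, and p̄_j = 0 for j > d. Then for every real x with 0 ≤ x ≤ d/(d+1), the series Σ_{j≥1} j·p_j·x^{j−1} converges and Σ_{j=1}^{d} j·p̄_j·x^{j−1} ≥ Σ_{j≥1} j·p_j·x^{j−1}. -/

import Mathlib

/-!
For `x ≤ d / (d + 1)` the weight `j x^(j-1)` is nonincreasing in `j ≥ d`, because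
`(j + 1) x ≤ j` there. Hence moving all mass of degrees `≥ d` down to degree `d` can only
increase `∑ j p_j x^(j-1)`, and the weighted tail is dominated by `d x^(d-1)` times the tail
of `p`, which also gives convergence.
-/

open Finset

theorem tsum_ite_le_eq_tsum_nat_add {M : Type*} [AddCommMonoid M] [TopologicalSpace M]
    (f : ℕ → M) (d : ℕ) :
    ∑' j, (if d ≤ j then f j else 0) = ∑' k, f (k + d) := by
  refine (Function.Injective.tsum_eq (add_left_injective d) fun j hj => ?_).symm.trans ?_
  · have hdj : d ≤ j := by_contra fun h => hj (if_neg h)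
    exact ⟨j - d, Nat.sub_add_cancel hdj⟩
  · simp

theorem succ_mul_pow_le_mul_pow_pred {x : ℝ} {j : ℕ} (hj : 1 ≤ j) (hx0 : 0 ≤ x)
    (hx : (j + 1) * x ≤ j) : ((j + 1 : ℕ) : ℝ) * x ^ j ≤ j * x ^ (j - 1) := by
  rw [← mul_pow_sub_one (by omega), Nat.cast_succ, ← mul_assoc]
  exact mul_le_mul_of_nonneg_right hx (by positivity)

theorem natCast_mul_pow_pred_le {x : ℝ} {d j : ℕ} (hd : 1 ≤ d) (hx0 : 0 ≤ x)
    (hx : x ≤ d / (d + 1)) (hj : d ≤ j) : (j : ℝ) * x ^ (j - 1) ≤ d * x ^ (d - 1) := by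
  induction j, hj using Nat.le_induction with
  | base => rfl
  | succ j hdj ih =>
    refine (succ_mul_pow_le_mul_pow_pred (hd.trans hdj) hx0 ?_).trans ih
    have hdj' : (d : ℝ) ≤ j := by exact_mod_cast hdj
    have hx1 : x ≤ 1 := hx.trans (div_le_one_of_le₀ (by linarith) (by positivity))
    rw [le_div_iff₀ (by positivity)] at hx
    -- `(j + 1) x - j = (j - d)(x - 1) + ((d + 1) x - d)`
    nlinarith [mul_nonneg (sub_nonneg.2 hdj') (sub_nonneg.2 hx1)]

theorem summable_mul_and_tsum_mul_le_truncated {p w : ℕ → ℝ} (hp : ∀ j, 0 ≤ p j)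
    (hsum : Summable p) (d : ℕ) (hw0 : ∀ j, 0 ≤ w j) (hw : ∀ j, d ≤ j → w j ≤ w d) :
    Summable (fun j => w j * p j) ∧
      ∑' j, w j * p j ≤
        ∑ j ∈ range d, w j * p j + w d * ∑' j, if d ≤ j then p j else 0 := by
  have htail_le : ∀ k, w (k + d) * p (k + d) ≤ w d * p (k + d) := fun k =>
    mul_le_mul_of_nonneg_right (hw _ (Nat.le_add_left d k)) (hp _)
  have hp_tail : Summable fun k => p (k + d) := (summable_nat_add_iff d).mpr hsum
  have hwp_tail : Summable fun k => w (k + d) * p (k + d) :=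
    .of_nonneg_of_le (fun k => mul_nonneg (hw0 _) (hp _)) htail_le (hp_tail.mul_left _)
  refine ⟨(summable_nat_add_iff d).mp hwp_tail, ?_⟩
  rw [← Summable.sum_add_tsum_nat_add' (f := fun j => w j * p j) hwp_tail,
    tsum_ite_le_eq_tsum_nat_add, ← tsum_mul_left]
  exact add_le_add_right (hwp_tail.tsum_le_tsum htail_le (hp_tail.mul_left _)) _

theorem sum_Icc_one_eq_sum_range_add {M : Type*} [AddCommMonoid M] {f : ℕ → M} (hf : f 0 = 0)
    {d : ℕ} (hd : 1 ≤ d) : ∑ j ∈ Icc 1 d, f j = ∑ j ∈ range d, f j + f d := by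
  rw [← Ico_add_one_right_eq_Icc, sum_Ico_succ_top hd, sum_range_eq_add_Ico _ hd, hf, zero_add]

theorem lt_truncation_derivative_ge_general
    (p : ℕ → ℝ) (hp : ∀ j, 0 ≤ p j) (hsum : Summable p)
    (d : ℕ) (hd : 1 ≤ d)
    (pbar : ℕ → ℝ)
    (hbar_lt : ∀ j, 1 ≤ j → j ≤ d - 1 → pbar j = p j)
    (hbar_d : pbar d = ∑' j : ℕ, if d ≤ j then p j else 0)
    (x : ℝ) (hx0 : 0 ≤ x) (hx1 : x ≤ (d : ℝ) / (d + 1)) :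
    Summable (fun j : ℕ => (j : ℝ) * p j * x ^ (j - 1)) ∧
      (∑' j : ℕ, (j : ℝ) * p j * x ^ (j - 1)) ≤
        ∑ j ∈ Finset.Icc 1 d, (j : ℝ) * pbar j * x ^ (j - 1) := by
  obtain ⟨hsummable, hle⟩ :=
    summable_mul_and_tsum_mul_le_truncated (w := fun j : ℕ => (j : ℝ) * x ^ (j - 1)) hp hsum d
      (fun j => by positivity) (fun j hj => natCast_mul_pow_pred_le hd hx0 hx1 hj)
  simp only [mul_right_comm _ (x ^ _) (p _), ← hbar_d] at hsummable hle
  have hhead : ∑ j ∈ range d, (j : ℝ) * p j * x ^ (j - 1) =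
      ∑ j ∈ range d, (j : ℝ) * pbar j * x ^ (j - 1) := by
    refine sum_congr rfl fun j hj => ?_
    rcases Nat.eq_zero_or_pos j with rfl | hj0
    · simp
    · rw [hbar_lt j hj0 (by have := mem_range.mp hj; omega)]
  refine ⟨hsummable, hle.trans_eq ?_⟩
  rw [sum_Icc_one_eq_sum_range_add (by simp) hd, hhead, mul_right_comm]

/-- Truncating a degree distribution `(p_j)_{j ≥ 1}` at degree `d`
(keeping `p_j` for `j < d`, lumping all mass of degrees `≥ d` onto degree `d`)
does not decrease the derivative of the moment generating function on `[0, d/(d+1)]`. -/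
theorem lt_truncation_derivative_ge
    (p : ℕ → ℝ) (hp0 : p 0 = 0) (hp : ∀ j, 0 ≤ p j) (hsum : Summable p)
    (htot : ∑' j, p j = 1) (d : ℕ) (hd : 1 ≤ d)
    (pbar : ℕ → ℝ)
    (hbar_lt : ∀ j, 1 ≤ j → j ≤ d - 1 → pbar j = p j)
    (hbar_d : pbar d = ∑' j : ℕ, if d ≤ j then p j else 0)
    (hbar_gt : ∀ j, d < j → pbar j = 0)
    (x : ℝ) (hx0 : 0 ≤ x) (hx1 : x ≤ (d : ℝ) / (d + 1)) :
    Summable (fun j : ℕ => (j : ℝ) * p j * x ^ (j - 1)) ∧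
      (∑' j : ℕ, (j : ℝ) * p j * x ^ (j - 1)) ≤
        ∑ j ∈ Finset.Icc 1 d, (j : ℝ) * pbar j * x ^ (j - 1) :=
  lt_truncation_derivative_ge_general p hp hsum d hd pbar hbar_lt hbar_d x hx0 hx1
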